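/- arXiv:2312.05559 — 5 statements merged into one kernel-verified Lean document; each statement's English description precedes it below -/
import Mathlib

section
/- Let $-1<\mu<1$ and $w(x)=(1-x^2)^{\mu}$ on $\Omega=(-1,1)$. If $\eta, u$ belong to the weighted Sobolev space $H^1_w(\Omega)$, then the product $\eta u$ belongs to $H^1_w(\Omega)$ and there is a constant $C>0$ (independent of $\eta,u$) such that $\|\eta u\|_{1,w} \le C\|\eta\|_{1,w}\|u\|_{1,w}$. -/
open MeasureTheory Set

/-- The Jacobi weight `w(x) = (1-x^2)^μ`. -/
noncomputable def jw (μ : ℝ) (x : ℝ) : ℝ := (1 - x^2) ^ μ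

/-- Membership in the weighted Sobolev space `H^1_w(-1,1)`. -/
def MemH1w (μ : ℝ) (f : ℝ → ℝ) : Prop :=
  DifferentiableOn ℝ f (Ioo (-1) 1) ∧
  IntegrableOn (fun x => ((f x)^2 + (deriv f x)^2) * jw μ x) (Ioo (-1) 1)

/-- The `H^1_w` norm. -/
noncomputable def H1wNorm (μ : ℝ) (f : ℝ → ℝ) : ℝ :=
  Real.sqrt (∫ x in Ioo (-1:ℝ) 1, ((f x)^2 + (deriv f x)^2) * jw μ x)

/-- Membership in the weighted space `L^2_w(-1,1)`. -/
def MemL2w (μ : ℝ) (f : ℝ → ℝ) : Prop :=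
  IntegrableOn (fun x => (f x)^2 * jw μ x) (Ioo (-1) 1)

/-- The `L^2_w` norm. -/
noncomputable def L2wNorm (μ : ℝ) (f : ℝ → ℝ) : ℝ :=
  Real.sqrt (∫ x in Ioo (-1:ℝ) 1, (f x)^2 * jw μ x)

/-- Membership in the weighted Sobolev space `H^2_w(-1,1)`. -/
def MemH2w (μ : ℝ) (f : ℝ → ℝ) : Prop :=
  DifferentiableOn ℝ f (Ioo (-1) 1) ∧ DifferentiableOn ℝ (deriv f) (Ioo (-1) 1) ∧
  IntegrableOn
    (fun x => ((f x)^2 + (deriv f x)^2 + (deriv (deriv f) x)^2) * jw μ x) (Ioo (-1) 1)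

/-- The `H^2_w` norm. -/
noncomputable def H2wNorm (μ : ℝ) (f : ℝ → ℝ) : ℝ :=
  Real.sqrt (∫ x in Ioo (-1:ℝ) 1,
    ((f x)^2 + (deriv f x)^2 + (deriv (deriv f) x)^2) * jw μ x)

/-- `H^1_{w,0}`: functions of `H^1_w` vanishing at `±1`. -/
def MemH1w0 (μ : ℝ) (f : ℝ → ℝ) : Prop :=
  MemH1w μ f ∧ f (-1) = 0 ∧ f 1 = 0

/-- The bilinear form `A_b(φ,ψ) = (φ,ψ)_w + b ∫ φ' (ψ w)'`. -/
noncomputable def bilinA (μ b : ℝ) (φ ψ : ℝ → ℝ) : ℝ :=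
  (∫ x in Ioo (-1:ℝ) 1, φ x * ψ x * jw μ x) +
  b * ∫ x in Ioo (-1:ℝ) 1, deriv φ x * deriv (fun y => ψ y * jw μ y) x

/-!
Because `μ < 1`, the reciprocal weight `w⁻¹ = (1 - x²)^(-μ)` is integrable, so by the weighted
Cauchy–Schwarz inequality `(∫ |u'|)² ≤ (∫ u'² w) (∫ w⁻¹)`; and because `μ > -1`, `w` itself is
integrable. Writing `u(x) = u(y) + ∫_y^x u'` and averaging over `y` against `w` gives the embedding
`sup |u|² ≤ K ‖u‖²_{1,w}`. The product rule then bounds the energy of `η u` by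
`2 sup |u|² ‖η‖²_{1,w} + 2 sup |η|² ‖u‖²_{1,w} ≤ 4 K ‖η‖²_{1,w} ‖u‖²_{1,w}`.
-/

lemma jw_pos (ν : ℝ) {x : ℝ} (hx : x ∈ Ioo (-1 : ℝ) 1) : 0 < jw ν x :=
  Real.rpow_pos_of_pos (by nlinarith [hx.1, hx.2]) ν

lemma jw_neg (ν : ℝ) {x : ℝ} (hx : x ∈ Ioo (-1 : ℝ) 1) : jw (-ν) x = (jw ν x)⁻¹ :=
  Real.rpow_neg (by nlinarith [hx.1, hx.2]) ν

lemma continuousOn_jw (ν : ℝ) : ContinuousOn (jw ν) (Ioo (-1) 1) :=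
  (continuous_const.sub (continuous_pow 2)).continuousOn.rpow_const fun x hx =>
    Or.inl (by simp only [Pi.sub_apply]; nlinarith [hx.1, hx.2])

lemma jw_le_one_add_rpow_add_rpow (ν : ℝ) {x : ℝ} (hx : x ∈ Ioo (-1 : ℝ) 1) :
    jw ν x ≤ 1 + (1 - x) ^ ν + (1 + x) ^ ν := by
  obtain ⟨hx₁, hx₂⟩ := hx
  have h₁ : 0 ≤ (1 - x) ^ ν := Real.rpow_nonneg (by linarith) ν
  have h₂ : 0 ≤ (1 + x) ^ ν := Real.rpow_nonneg (by linarith) ν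
  rcases le_total 0 ν with hν | hν
  · have : jw ν x ≤ 1 := Real.rpow_le_one (by nlinarith) (by nlinarith) hν
    linarith
  · -- `1 - x^2 = (1 - x)(1 + x)` dominates the smaller of its two factors
    rcases le_total 0 x with h | h
    · have : jw ν x ≤ (1 - x) ^ ν := Real.rpow_le_rpow_of_nonpos (by linarith) (by nlinarith) hν
      linarith
    · have : jw ν x ≤ (1 + x) ^ ν := Real.rpow_le_rpow_of_nonpos (by linarith) (by nlinarith) hν
      linarith

lemma integrableOn_jw {ν : ℝ} (hν : -1 < ν) : IntegrableOn (jw ν) (Ioo (-1) 1) := by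
  have hpow : IntervalIntegrable (fun x : ℝ => x ^ ν) volume 0 2 :=
    intervalIntegral.intervalIntegrable_rpow' hν
  have hminus : IntegrableOn (fun x : ℝ => (1 - x) ^ ν) (Ioo (-1) 1) := by
    have := hpow.comp_sub_left 1
    norm_num at this
    exact (intervalIntegrable_iff_integrableOn_Ioo_of_le (by norm_num)).1 this.symm
  have hplus : IntegrableOn (fun x : ℝ => (1 + x) ^ ν) (Ioo (-1) 1) := by
    have := hpow.comp_add_left 1
    norm_num at this
    exact (intervalIntegrable_iff_integrableOn_Ioo_of_le (by norm_num)).1 this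
  refine Integrable.mono' (((integrableOn_const (C := (1 : ℝ)) (by simp)).add hminus).add hplus)
    ((continuousOn_jw ν).aestronglyMeasurable measurableSet_Ioo) ?_
  filter_upwards [ae_restrict_mem measurableSet_Ioo] with x hx
  rw [Real.norm_of_nonneg (jw_pos ν hx).le]
  exact jw_le_one_add_rpow_add_rpow ν hx

lemma setIntegral_jw_pos {ν : ℝ} (hν : -1 < ν) : 0 < ∫ x in Ioo (-1 : ℝ) 1, jw ν x := by
  rw [setIntegral_pos_iff_support_of_nonneg_ae
    (ae_restrict_of_forall_mem measurableSet_Ioo fun x hx => (jw_pos ν hx).le)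
    (integrableOn_jw hν)]
  have : Function.support (jw ν) ∩ Ioo (-1) 1 = Ioo (-1) 1 :=
    inter_eq_right.2 fun x hx => (jw_pos ν hx).ne'
  simp [this]

section CauchySchwarz

variable {α : Type*} [MeasurableSpace α] {m : Measure α} {f w : α → ℝ}

lemma memLp_two_abs_mul_sqrt_and_inv_sqrt (hf : AEMeasurable f m)
    (hw : AEMeasurable w m) (hw_pos : ∀ᵐ x ∂m, 0 < w x)
    (hfw : Integrable (fun x => f x ^ 2 * w x) m) (hw_inv : Integrable (fun x => (w x)⁻¹) m) :
    MemLp (fun x => |f x| * √(w x)) 2 m ∧ MemLp (fun x => (√(w x))⁻¹) 2 m := by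
  constructor
  · refine (memLp_two_iff_integrable_sq (hf.abs.mul hw.sqrt).aestronglyMeasurable).2 (hfw.congr ?_)
    filter_upwards [hw_pos] with x hx
    rw [Pi.mul_apply, mul_pow, sq_abs, Real.sq_sqrt hx.le]
  · refine (memLp_two_iff_integrable_sq hw.sqrt.inv.aestronglyMeasurable).2 (hw_inv.congr ?_)
    filter_upwards [hw_pos] with x hx
    rw [Pi.inv_apply, inv_pow, Real.sq_sqrt hx.le]

lemma abs_ae_eq_abs_mul_sqrt_mul_inv_sqrt (hw_pos : ∀ᵐ x ∂m, 0 < w x) :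
    (fun x => |f x|) =ᵐ[m] fun x => |f x| * √(w x) * (√(w x))⁻¹ := by
  filter_upwards [hw_pos] with x hx
  rw [mul_inv_cancel_right₀ (Real.sqrt_pos.2 hx).ne']

lemma integrable_of_integrable_sq_mul_of_integrable_inv (hf : AEMeasurable f m)
    (hw : AEMeasurable w m) (hw_pos : ∀ᵐ x ∂m, 0 < w x)
    (hfw : Integrable (fun x => f x ^ 2 * w x) m) (hw_inv : Integrable (fun x => (w x)⁻¹) m) :
    Integrable f m := by
  obtain ⟨hF, hG⟩ := memLp_two_abs_mul_sqrt_and_inv_sqrt hf hw hw_pos hfw hw_inv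
  have : Integrable (fun x => |f x|) m :=
    (hF.integrable_mul hG).congr (abs_ae_eq_abs_mul_sqrt_mul_inv_sqrt hw_pos).symm
  exact (integrable_norm_iff hf.aestronglyMeasurable).1 this

lemma sq_integral_abs_le_integral_sq_mul_mul_integral_inv (hf : AEMeasurable f m)
    (hw : AEMeasurable w m) (hw_pos : ∀ᵐ x ∂m, 0 < w x)
    (hfw : Integrable (fun x => f x ^ 2 * w x) m) (hw_inv : Integrable (fun x => (w x)⁻¹) m) :
    (∫ x, |f x| ∂m) ^ 2 ≤ (∫ x, f x ^ 2 * w x ∂m) * ∫ x, (w x)⁻¹ ∂m := by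
  obtain ⟨hF, hG⟩ := memLp_two_abs_mul_sqrt_and_inv_sqrt hf hw hw_pos hfw hw_inv
  have holder := integral_mul_le_Lp_mul_Lq_of_nonneg Real.HolderConjugate.two_two
    (ae_of_all _ fun x => mul_nonneg (abs_nonneg (f x)) (Real.sqrt_nonneg (w x)))
    (ae_of_all _ fun x => inv_nonneg.2 (Real.sqrt_nonneg (w x)))
    (by simpa using hF) (by simpa using hG)
  have hF_sq : ∫ x, (|f x| * √(w x)) ^ (2 : ℝ) ∂m = ∫ x, f x ^ 2 * w x ∂m := by
    refine integral_congr_ae ?_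
    filter_upwards [hw_pos] with x hx
    rw [Real.rpow_two, mul_pow, sq_abs, Real.sq_sqrt hx.le]
  have hG_sq : ∫ x, (√(w x))⁻¹ ^ (2 : ℝ) ∂m = ∫ x, (w x)⁻¹ ∂m := by
    refine integral_congr_ae ?_
    filter_upwards [hw_pos] with x hx
    rw [Real.rpow_two, inv_pow, Real.sq_sqrt hx.le]
  rw [hF_sq, hG_sq, ← integral_congr_ae (abs_ae_eq_abs_mul_sqrt_mul_inv_sqrt hw_pos),
    ← Real.sqrt_eq_rpow, ← Real.sqrt_eq_rpow] at holder
  have hA : 0 ≤ ∫ x, f x ^ 2 * w x ∂m := integral_nonneg_of_ae <| by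
    filter_upwards [hw_pos] with x hx using mul_nonneg (sq_nonneg _) hx.le
  have hB : 0 ≤ ∫ x, (w x)⁻¹ ∂m := integral_nonneg_of_ae <| by
    filter_upwards [hw_pos] with x hx using inv_nonneg.2 hx.le
  calc (∫ x, |f x| ∂m) ^ 2
      ≤ (√(∫ x, f x ^ 2 * w x ∂m) * √(∫ x, (w x)⁻¹ ∂m)) ^ 2 :=
        pow_le_pow_left₀ (integral_nonneg fun x => abs_nonneg (f x)) holder 2
    _ = (∫ x, f x ^ 2 * w x ∂m) * ∫ x, (w x)⁻¹ ∂m := by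
        rw [mul_pow, Real.sq_sqrt hA, Real.sq_sqrt hB]

end CauchySchwarz

lemma abs_sub_le_setIntegral_abs_deriv {u : ℝ → ℝ} {a b : ℝ}
    (hu : DifferentiableOn ℝ u (Ioo a b)) (hu' : IntegrableOn (deriv u) (Ioo a b))
    {x y : ℝ} (hx : x ∈ Ioo a b) (hy : y ∈ Ioo a b) :
    |u x - u y| ≤ ∫ z in Ioo a b, |deriv u z| := by
  wlog hyx : y ≤ x generalizing x y
  · rw [abs_sub_comm]
    exact this hy hx (le_of_not_ge hyx)
  have hsub : Icc y x ⊆ Ioo a b := Icc_subset_Ioo hy.1 hx.2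
  have hftc : ∫ z in y..x, deriv u z = u x - u y := by
    refine intervalIntegral.integral_eq_sub_of_hasDerivAt (fun z hz => ?_)
      ((hu'.mono_set (uIcc_of_le hyx ▸ hsub)).intervalIntegrable)
    have hz' := hsub (uIcc_of_le hyx ▸ hz)
    exact (hu.differentiableAt (Ioo_mem_nhds hz'.1 hz'.2)).hasDerivAt
  calc |u x - u y| = |∫ z in y..x, deriv u z| := by rw [hftc]
    _ ≤ ∫ z in y..x, |deriv u z| := intervalIntegral.abs_integral_le_integral_abs hyx
    _ = ∫ z in Ioc y x, |deriv u z| := intervalIntegral.integral_of_le hyx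
    _ ≤ ∫ z in Ioo a b, |deriv u z| :=
        setIntegral_mono_set hu'.abs (ae_of_all _ fun z => abs_nonneg _)
          (Ioc_subset_Icc_self.trans hsub).eventuallyLE

section H1w

variable {μ : ℝ} {u : ℝ → ℝ}

lemma H1wNorm_sq (μ : ℝ) (u : ℝ → ℝ) :
    H1wNorm μ u ^ 2 = ∫ x in Ioo (-1 : ℝ) 1, (u x ^ 2 + deriv u x ^ 2) * jw μ x :=
  Real.sq_sqrt <| setIntegral_nonneg measurableSet_Ioo fun x hx =>
    mul_nonneg (by positivity) (jw_pos μ hx).le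

lemma MemH1w.integrableOn_sq_mul_jw (hu : MemH1w μ u) :
    IntegrableOn (fun x => u x ^ 2 * jw μ x) (Ioo (-1) 1) := by
  refine Integrable.mono' hu.2
    (((hu.1.continuousOn.pow 2).mul (continuousOn_jw μ)).aestronglyMeasurable measurableSet_Ioo) ?_
  filter_upwards [ae_restrict_mem measurableSet_Ioo] with x hx
  have hw := jw_pos μ hx
  rw [Real.norm_of_nonneg (by positivity)]
  nlinarith [sq_nonneg (deriv u x)]

lemma MemH1w.integrableOn_deriv_sq_mul_jw (hu : MemH1w μ u) :
    IntegrableOn (fun x => deriv u x ^ 2 * jw μ x) (Ioo (-1) 1) := by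
  refine Integrable.mono' hu.2 ((((measurable_deriv u).pow_const 2).aemeasurable.mul
    ((continuousOn_jw μ).aemeasurable measurableSet_Ioo)).aestronglyMeasurable) ?_
  filter_upwards [ae_restrict_mem measurableSet_Ioo] with x hx
  have hw := jw_pos μ hx
  rw [Real.norm_of_nonneg (by positivity)]
  nlinarith [sq_nonneg (u x)]

lemma setIntegral_sq_mul_jw_add_setIntegral_deriv_sq_mul_jw (hu : MemH1w μ u) :
    (∫ x in Ioo (-1 : ℝ) 1, u x ^ 2 * jw μ x) + ∫ x in Ioo (-1 : ℝ) 1, deriv u x ^ 2 * jw μ x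
      = H1wNorm μ u ^ 2 := by
  rw [H1wNorm_sq, ← integral_add hu.integrableOn_sq_mul_jw hu.integrableOn_deriv_sq_mul_jw]
  simp only [add_mul]

lemma integrableOn_inv_jw (hμ₂ : μ < 1) :
    IntegrableOn (fun x => (jw μ x)⁻¹) (Ioo (-1) 1) :=
  (integrableOn_jw (neg_lt_neg hμ₂)).congr_fun (fun _ hx => jw_neg μ hx) measurableSet_Ioo

lemma MemH1w.integrableOn_deriv (hμ₂ : μ < 1) (hu : MemH1w μ u) :
    IntegrableOn (deriv u) (Ioo (-1) 1) :=
  integrable_of_integrable_sq_mul_of_integrable_inv (measurable_deriv u).aemeasurable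
    ((continuousOn_jw μ).aemeasurable measurableSet_Ioo)
    (ae_restrict_of_forall_mem measurableSet_Ioo fun _ hx => jw_pos μ hx)
    hu.integrableOn_deriv_sq_mul_jw (integrableOn_inv_jw hμ₂)

lemma MemH1w.sq_setIntegral_abs_deriv_le (hμ₂ : μ < 1) (hu : MemH1w μ u) :
    (∫ x in Ioo (-1 : ℝ) 1, |deriv u x|) ^ 2 ≤
      (∫ x in Ioo (-1 : ℝ) 1, deriv u x ^ 2 * jw μ x) * ∫ x in Ioo (-1 : ℝ) 1, (jw μ x)⁻¹ :=
  sq_integral_abs_le_integral_sq_mul_mul_integral_inv (measurable_deriv u).aemeasurable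
    ((continuousOn_jw μ).aemeasurable measurableSet_Ioo)
    (ae_restrict_of_forall_mem measurableSet_Ioo fun _ hx => jw_pos μ hx)
    hu.integrableOn_deriv_sq_mul_jw (integrableOn_inv_jw hμ₂)


lemma MemH1w.sq_le (hμ₁ : -1 < μ) (hμ₂ : μ < 1) (hu : MemH1w μ u) {x : ℝ}
    (hx : x ∈ Ioo (-1 : ℝ) 1) :
    u x ^ 2 ≤ 2 * (∫ y in Ioo (-1 : ℝ) 1, jw μ y)⁻¹ * (∫ y in Ioo (-1 : ℝ) 1, u y ^ 2 * jw μ y)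
      + 2 * (∫ y in Ioo (-1 : ℝ) 1, (jw μ y)⁻¹) *
        ∫ y in Ioo (-1 : ℝ) 1, deriv u y ^ 2 * jw μ y := by
  set W := ∫ y in Ioo (-1 : ℝ) 1, jw μ y
  set A := ∫ y in Ioo (-1 : ℝ) 1, u y ^ 2 * jw μ y
  set L := ∫ y in Ioo (-1 : ℝ) 1, |deriv u y|
  have hW : 0 < W := setIntegral_jw_pos hμ₁
  have hpt : ∀ y ∈ Ioo (-1 : ℝ) 1,
      u x ^ 2 * jw μ y ≤ 2 * (u y ^ 2 * jw μ y) + 2 * L ^ 2 * jw μ y := by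
    intro y hy
    have hL : (u x - u y) ^ 2 ≤ L ^ 2 := by
      rw [← sq_abs]
      exact pow_le_pow_left₀ (abs_nonneg _)
        (abs_sub_le_setIntegral_abs_deriv hu.1 (hu.integrableOn_deriv hμ₂) hx hy) 2
    have : u x ^ 2 ≤ 2 * u y ^ 2 + 2 * L ^ 2 := by nlinarith [sq_nonneg (u x - 2 * u y)]
    nlinarith [mul_le_mul_of_nonneg_right this (jw_pos μ hy).le]
  have hint : u x ^ 2 * W ≤ 2 * A + 2 * L ^ 2 * W := by
    have := setIntegral_mono_on ((integrableOn_jw hμ₁).const_mul (u x ^ 2))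
      ((hu.integrableOn_sq_mul_jw.const_mul 2).add ((integrableOn_jw hμ₁).const_mul (2 * L ^ 2)))
      measurableSet_Ioo hpt
    simp only [Pi.add_apply] at this
    rwa [integral_add (hu.integrableOn_sq_mul_jw.const_mul 2)
      ((integrableOn_jw hμ₁).const_mul (2 * L ^ 2)), integral_const_mul, integral_const_mul,
      integral_const_mul] at this
  have hux : u x ^ 2 ≤ 2 * W⁻¹ * A + 2 * L ^ 2 := by
    calc u x ^ 2 ≤ (2 * A + 2 * L ^ 2 * W) / W := (le_div_iff₀ hW).2 hint
      _ = 2 * W⁻¹ * A + 2 * L ^ 2 := by field_simp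
  nlinarith [hu.sq_setIntegral_abs_deriv_le hμ₂]

lemma exists_sq_le_mul_H1wNorm_sq (hμ₁ : -1 < μ) (hμ₂ : μ < 1) :
    ∃ K > 0, ∀ u : ℝ → ℝ, MemH1w μ u → ∀ x ∈ Ioo (-1 : ℝ) 1, u x ^ 2 ≤ K * H1wNorm μ u ^ 2 := by
  set W := ∫ y in Ioo (-1 : ℝ) 1, jw μ y
  set I := ∫ y in Ioo (-1 : ℝ) 1, (jw μ y)⁻¹
  have hW : 0 < W⁻¹ := inv_pos.2 (setIntegral_jw_pos hμ₁)
  refine ⟨2 * max W⁻¹ I, by positivity, fun u hu x hx => ?_⟩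
  rw [← setIntegral_sq_mul_jw_add_setIntegral_deriv_sq_mul_jw hu]
  have hA : 0 ≤ ∫ y in Ioo (-1 : ℝ) 1, u y ^ 2 * jw μ y :=
    setIntegral_nonneg measurableSet_Ioo fun y hy => mul_nonneg (sq_nonneg _) (jw_pos μ hy).le
  have hB : 0 ≤ ∫ y in Ioo (-1 : ℝ) 1, deriv u y ^ 2 * jw μ y :=
    setIntegral_nonneg measurableSet_Ioo fun y hy => mul_nonneg (sq_nonneg _) (jw_pos μ hy).le
  nlinarith [hu.sq_le hμ₁ hμ₂ hx, le_max_left W⁻¹ I, le_max_right W⁻¹ I]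

end H1w

lemma sq_add_sq_deriv_mul_le {f g f' g' a b : ℝ} (ha : f ^ 2 ≤ a) (hb : g ^ 2 ≤ b) :
    (f * g) ^ 2 + (f' * g + f * g') ^ 2 ≤ 2 * b * (f ^ 2 + f' ^ 2) + 2 * a * (g ^ 2 + g' ^ 2) := by
  have hfg : (f * g) ^ 2 ≤ a * g ^ 2 := by
    rw [mul_pow]; exact mul_le_mul_of_nonneg_right ha (sq_nonneg g)
  have hcross : (f' * g + f * g') ^ 2 ≤ 2 * (b * f' ^ 2) + 2 * (a * g' ^ 2) := by
    nlinarith [sq_nonneg (f' * g - f * g'), mul_le_mul_of_nonneg_left hb (sq_nonneg f'),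
      mul_le_mul_of_nonneg_right ha (sq_nonneg g')]
  nlinarith [sq_nonneg f, sq_nonneg g]

lemma MemH1w.mul_of_sq_le {μ a b : ℝ} {f g : ℝ → ℝ} (hf : MemH1w μ f) (hg : MemH1w μ g)
    (ha : ∀ x ∈ Ioo (-1 : ℝ) 1, f x ^ 2 ≤ a) (hb : ∀ x ∈ Ioo (-1 : ℝ) 1, g x ^ 2 ≤ b) :
    MemH1w μ (fun x => f x * g x) ∧
      H1wNorm μ (fun x => f x * g x) ^ 2 ≤ 2 * b * H1wNorm μ f ^ 2 + 2 * a * H1wNorm μ g ^ 2 := by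
  have hpt : ∀ x ∈ Ioo (-1 : ℝ) 1,
      ((f x * g x) ^ 2 + deriv (fun y => f y * g y) x ^ 2) * jw μ x ≤
        2 * b * ((f x ^ 2 + deriv f x ^ 2) * jw μ x) +
          2 * a * ((g x ^ 2 + deriv g x ^ 2) * jw μ x) := by
    intro x hx
    have hx' : Ioo (-1 : ℝ) 1 ∈ nhds x := Ioo_mem_nhds hx.1 hx.2
    rw [deriv_fun_mul (hf.1.differentiableAt hx') (hg.1.differentiableAt hx')]
    nlinarith [mul_le_mul_of_nonneg_right (sq_add_sq_deriv_mul_le (f' := deriv f x)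
      (g' := deriv g x) (ha x hx) (hb x hx)) (jw_pos μ hx).le]
  have hdom := (hf.2.const_mul (2 * b)).add (hg.2.const_mul (2 * a))
  have hint : IntegrableOn
      (fun x => ((f x * g x) ^ 2 + deriv (fun y => f y * g y) x ^ 2) * jw μ x) (Ioo (-1) 1) := by
    refine Integrable.mono' hdom ((((hf.1.mul hg.1).continuousOn.pow 2).aemeasurable
      measurableSet_Ioo).add ((measurable_deriv _).pow_const 2).aemeasurable |>.mul
      ((continuousOn_jw μ).aemeasurable measurableSet_Ioo)).aestronglyMeasurable ?_
    filter_upwards [ae_restrict_mem measurableSet_Ioo] with x hx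
    rw [Real.norm_of_nonneg (mul_nonneg (by positivity) (jw_pos μ hx).le)]
    exact hpt x hx
  refine ⟨⟨hf.1.mul hg.1, hint⟩, ?_⟩
  have := setIntegral_mono_on hint hdom measurableSet_Ioo hpt
  simp only [Pi.add_apply] at this
  rwa [integral_add (hf.2.const_mul _) (hg.2.const_mul _), integral_const_mul,
    integral_const_mul, ← H1wNorm_sq, ← H1wNorm_sq, ← H1wNorm_sq] at this

/-- `H^1_w(-1,1)` with Jacobi weight, `-1<μ<1`, is a Banach algebra:
`η u ∈ H^1_w` with `‖η u‖_{1,w} ≤ C ‖η‖_{1,w} ‖u‖_{1,w}`. -/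
theorem weighted_H1_algebra (μ : ℝ) (hμ₁ : -1 < μ) (hμ₂ : μ < 1) :
    ∃ C > 0, ∀ η u : ℝ → ℝ, MemH1w μ η → MemH1w μ u →
      MemH1w μ (fun x => η x * u x) ∧
      H1wNorm μ (fun x => η x * u x) ≤ C * H1wNorm μ η * H1wNorm μ u := by
  obtain ⟨K, hK, hsup⟩ := exists_sq_le_mul_H1wNorm_sq hμ₁ hμ₂
  refine ⟨2 * √K, by positivity, fun η u hη hu => ?_⟩
  obtain ⟨hmem, hnorm⟩ := hη.mul_of_sq_le hu (hsup η hη) (hsup u hu)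
  refine ⟨hmem, (pow_le_pow_iff_left₀ (Real.sqrt_nonneg _) ?_ two_ne_zero).1 ?_⟩
  · exact mul_nonneg (mul_nonneg (by positivity) (Real.sqrt_nonneg _)) (Real.sqrt_nonneg _)
  · calc H1wNorm μ (fun x => η x * u x) ^ 2
        ≤ 2 * (K * H1wNorm μ u ^ 2) * H1wNorm μ η ^ 2 +
            2 * (K * H1wNorm μ η ^ 2) * H1wNorm μ u ^ 2 := hnorm
      _ = (2 * √K * H1wNorm μ η * H1wNorm μ u) ^ 2 := by
          rw [mul_pow, mul_pow, mul_pow, Real.sq_sqrt hK.le]; ring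
end

section
/- Let $-1<\mu<1$ and $w(x)=(1-x^2)^{\mu}$. Every function $f\in H^1_w(-1,1)$ is continuous on $[-1,1]$; in fact $f\in H^r(-1,1)$ with $r=\min\{1,1-\mu/2\}>1/2$, and hence $f$ extends to a continuous function on $[-1,1]$. -/
open MeasureTheory Set

-- integrability of (1-x^2)^ν on (-1,1) for ν > -1
lemma integrableOn_one_sub_sq_rpow {ν : ℝ} (hν : -1 < ν) :
    IntegrableOn (fun x => (1 - x^2) ^ ν) (Ioo (-1:ℝ) 1) := by
  have h1 : IntervalIntegrable (fun x : ℝ => x ^ ν) volume 0 2 :=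
    intervalIntegral.intervalIntegrable_rpow' hν
  have hplus : IntegrableOn (fun x : ℝ => (x + 1) ^ ν) (Ioo (-1:ℝ) 1) := by
    have := h1.comp_add_right 1
    norm_num at this
    rw [intervalIntegrable_iff, uIoc_of_le (by norm_num : (-1:ℝ) ≤ 1)] at this
    exact this.mono_set Ioo_subset_Ioc_self
  have hminus : IntegrableOn (fun x : ℝ => (1 - x) ^ ν) (Ioo (-1:ℝ) 1) := by
    have := (h1.comp_sub_left 1).symm
    norm_num at this
    rw [intervalIntegrable_iff, uIoc_of_le (by norm_num : (-1:ℝ) ≤ 1)] at this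
    exact this.mono_set Ioo_subset_Ioc_self
  set C : ℝ := 2 ^ ν + 1 with hC
  have hC0 : 0 ≤ C := by positivity
  have hbase : ∀ b : ℝ, 1 ≤ b → b ≤ 2 → b ^ ν ≤ C := by
    intro b hb1 hb2
    rcases le_or_gt 0 ν with h | h
    · have : b ^ ν ≤ 2 ^ ν := Real.rpow_le_rpow (by linarith) hb2 h
      linarith
    · have : b ^ ν ≤ 1 := Real.rpow_le_one_of_one_le_of_nonpos hb1 h.le
      have h2 : (0:ℝ) ≤ 2 ^ ν := Real.rpow_nonneg (by norm_num) ν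
      linarith
  refine Integrable.mono' (((hminus.add hplus).smul C)) ?_ ?_
  · apply Measurable.aestronglyMeasurable
    fun_prop
  · filter_upwards [self_mem_ae_restrict measurableSet_Ioo] with x hx
    obtain ⟨hx1, hx2⟩ := hx
    have ha : (0:ℝ) ≤ 1 - x := by linarith
    have hb : (0:ℝ) ≤ 1 + x := by linarith
    have key : (1 - x^2 : ℝ) ^ ν = (1 - x) ^ ν * (1 + x) ^ ν := by
      rw [← Real.mul_rpow ha hb]; ring_nf
    have hm : (0:ℝ) ≤ (1 - x) ^ ν := Real.rpow_nonneg ha ν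
    have hp : (0:ℝ) ≤ (1 + x) ^ ν := Real.rpow_nonneg hb ν
    rw [Real.norm_eq_abs, abs_of_nonneg (by rw [key]; positivity)]
    rw [key]
    have hbound : (1 - x) ^ ν * (1 + x) ^ ν ≤ C * ((1 - x) ^ ν + (x + 1) ^ ν) := by
      rcases le_or_gt 0 x with h | h
      · have : (1 + x) ^ ν ≤ C := hbase _ (by linarith) (by linarith)
        have h2 : (1 - x) ^ ν * (1 + x) ^ ν ≤ (1 - x) ^ ν * C := by
          exact mul_le_mul_of_nonneg_left this hm
        have h3 : (0:ℝ) ≤ (x + 1) ^ ν := Real.rpow_nonneg (by linarith) ν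
        nlinarith
      · have : (1 - x) ^ ν ≤ C := hbase _ (by linarith) (by linarith)
        have h2 : (1 - x) ^ ν * (1 + x) ^ ν ≤ C * (1 + x) ^ ν := by
          exact mul_le_mul_of_nonneg_right this hp
        have h3 : (x + 1 : ℝ) = 1 + x := by ring
        rw [h3]
        nlinarith
    simpa [smul_eq_mul] using hbound

/-- every `f ∈ H^1_w(-1,1)` with `-1<μ<1` extends to a continuous
function on `[-1,1]`. -/
theorem weighted_H1_continuous (μ : ℝ) (hμ₁ : -1 < μ) (hμ₂ : μ < 1)
    (f : ℝ → ℝ) (hf : MemH1w μ f) :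
    ∃ g : ℝ → ℝ, ContinuousOn g (Icc (-1) 1) ∧ EqOn f g (Ioo (-1) 1) := by
  -- positivity of the weight on the open interval
  have hwpos : ∀ x ∈ Ioo (-1:ℝ) 1, 0 < jw μ x := by
    intro x hx
    have : (0:ℝ) < 1 - x ^ 2 := by nlinarith [hx.1, hx.2]
    exact Real.rpow_pos_of_pos this μ
  -- integrability of w⁻¹
  have hw : IntegrableOn (fun x => (jw μ x)⁻¹) (Ioo (-1:ℝ) 1) := by
    refine IntegrableOn.congr_fun (integrableOn_one_sub_sq_rpow (ν := -μ) (by linarith)) ?_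
      measurableSet_Ioo
    intro x hx
    have h0 : (0:ℝ) < 1 - x ^ 2 := by nlinarith [hx.1, hx.2]
    simp [jw, Real.rpow_neg h0.le]
  -- integrability of f'^2 w
  have hg : IntegrableOn (fun x => (deriv f x)^2 * jw μ x) (Ioo (-1:ℝ) 1) := by
    refine Integrable.mono' hf.2 ?_ ?_
    · apply Measurable.aestronglyMeasurable
      apply ((measurable_deriv f).pow_const 2).mul
      unfold jw; fun_prop
    · filter_upwards [self_mem_ae_restrict measurableSet_Ioo] with x hx
      have h1 := (hwpos x hx).le
      rw [Real.norm_eq_abs, abs_of_nonneg (by positivity)]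
      nlinarith [sq_nonneg (f x), sq_nonneg (deriv f x)]
  -- integrability of f'
  have hd : IntegrableOn (deriv f) (Ioo (-1:ℝ) 1) := by
    refine Integrable.mono' (((hg.add hw).div_const 2)) (measurable_deriv f).aestronglyMeasurable ?_
    filter_upwards [self_mem_ae_restrict measurableSet_Ioo] with x hx
    have h1 := hwpos x hx
    have h2 : jw μ x * (jw μ x)⁻¹ = 1 := mul_inv_cancel₀ h1.ne'
    rw [Real.norm_eq_abs]
    simp only [Pi.add_apply]
    have key : 2 * |deriv f x| * jw μ x ≤ (deriv f x)^2 * (jw μ x)^2 + 1 := by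
      nlinarith [sq_nonneg (|deriv f x| * jw μ x - 1), sq_abs (deriv f x)]
    have e1 : |deriv f x| = (2 * |deriv f x| * jw μ x) * (jw μ x)⁻¹ / 2 := by
      field_simp
    have e2 : ((deriv f x)^2 * jw μ x + (jw μ x)⁻¹) / 2
        = ((deriv f x)^2 * (jw μ x)^2 + 1) * (jw μ x)⁻¹ / 2 := by
      field_simp
    rw [e1, e2]
    have := mul_le_mul_of_nonneg_right key (inv_nonneg.2 h1.le)
    linarith
  have hInt : IntervalIntegrable (deriv f) volume (-1) 1 := by
    rw [intervalIntegrable_iff, uIoc_of_le (by norm_num : (-1:ℝ) ≤ 1)]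
    exact (integrableOn_Ioc_iff_integrableOn_Ioo).2 hd
  refine ⟨fun t => f 0 + ∫ x in (0:ℝ)..t, deriv f x, ?_, ?_⟩
  · have h01 : (0:ℝ) ∈ uIcc (-1:ℝ) 1 := by
      rw [uIcc_of_le (by norm_num : (-1:ℝ) ≤ 1)]; norm_num
    have := intervalIntegral.continuousOn_primitive_interval' hInt h01
    rw [uIcc_of_le (by norm_num : (-1:ℝ) ≤ 1)] at this
    exact continuousOn_const.add this
  · intro t ht
    have hsub : uIcc (0:ℝ) t ⊆ Ioo (-1:ℝ) 1 := by
      intro x hx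
      rw [mem_uIcc] at hx
      obtain ⟨h1, h2⟩ | ⟨h1, h2⟩ := hx <;>
        exact ⟨by nlinarith [ht.1, ht.2], by nlinarith [ht.1, ht.2]⟩
    have hdiff : ∀ x ∈ uIcc (0:ℝ) t, DifferentiableAt ℝ f x := fun x hx =>
      (hf.1 x (hsub hx)).differentiableAt (Ioo_mem_nhds (hsub hx).1 (hsub hx).2)
    have hint : IntervalIntegrable (deriv f) volume 0 t := by
      refine hInt.mono_set ?_
      rw [uIcc_of_le (by norm_num : (-1:ℝ) ≤ 1)]
      exact fun x hx => Ioo_subset_Icc_self (hsub hx)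
    have := intervalIntegral.integral_deriv_eq_sub hdiff hint
    simp only [this]
    ring
end

section
/- Let $T>0$, $c=0$, $b>0$, $-1<\mu<1$, $w(x)=(1-x^2)^\mu$. Suppose $(\eta_1,u_1)$ and $(\eta_2,u_2)$ are two solutions in $C([0,T];H^2_w)\times C([0,T];H^2_w)$ of the integral system $\eta(t)=H(t)+\int_0^t A_D(u+\eta u)\,d\tau$, $u(t)=U(t)+\int_0^t A_D(\eta+u^2/2)\,d\tau$ with the same data $H,U$. Then $(\eta_1,u_1)=(\eta_2,u_2)$ on $[0,T]$. -/
/-!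
Since solutions are jointly continuous, the argument can run in the sup norm on
`[0,T] × [-1,1]`. The kernel `G_ξ` of `A_D` is bounded there, and on the bounded range of the
two solutions the nonlinearities `u + ηu` and `η + u²/2` are Lipschitz, so
`D = |η₁ - η₂| + |u₁ - u₂|` satisfies a linear Volterra inequality: `D ≤ c τⁿ` implies
`D ≤ K c tⁿ⁺¹ / (n + 1)`. Iterating from a uniform bound `M` gives `D ≤ M (K t)ⁿ / n!` for
every `n`, hence `D = 0`.
-/

open MeasureTheory Set

/-- `w₁(x) = sinh((1+x)/√b)`. -/
noncomputable def wone (b x : ℝ) : ℝ := Real.sinh ((1 + x) / Real.sqrt b)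

/-- `w₂(x) = sinh((1-x)/√b)`. -/
noncomputable def wtwo (b x : ℝ) : ℝ := Real.sinh ((1 - x) / Real.sqrt b)

/-- The (constant) Wronskian `W = w₁ w₂' - w₁' w₂`, evaluated at `0`. -/
noncomputable def Wron (b : ℝ) : ℝ :=
  wone b 0 * deriv (wtwo b) 0 - deriv (wone b) 0 * wtwo b 0

/-- The `ξ`-derivative `G_ξ(x,ξ)` of the Green's function
`G(x,ξ) = -(1/(bW)) w₁(min(x,ξ)) w₂(max(x,ξ))`, taken piecewise away from `ξ = x`. -/
noncomputable def Gxi (b x ξ : ℝ) : ℝ :=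
  if ξ ≤ x then -(1 / (b * Wron b)) * deriv (wone b) ξ * wtwo b x
  else -(1 / (b * Wron b)) * wone b x * deriv (wtwo b) ξ

/-- The solution operator `A_D f (x) = ∫ G_ξ(x,ξ) f(ξ) dξ` of
`v - b v'' = -f'`, `v(±1) = 0`. -/
noncomputable def AD (b : ℝ) (f : ℝ → ℝ) (x : ℝ) : ℝ :=
  ∫ ξ in Set.Ioo (-1:ℝ) 1, Gxi b x ξ * f ξ

/-- `(η,u)` solves the integral system for the BBM-BBM case `c = 0`:
`η(t) = H(t) + ∫₀ᵗ A_D(u + ηu) dτ`, `u(t) = U(t) + ∫₀ᵗ A_D(η + u²/2) dτ`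
on `[0,T]`, as a member of `C([0,T];H²_w) × C([0,T];H²_w)`. -/
def IsSolBBM (T b μ : ℝ) (H U η u : ℝ → ℝ → ℝ) : Prop :=
  Continuous (fun p : ℝ × ℝ => η p.1 p.2) ∧
  Continuous (fun p : ℝ × ℝ => u p.1 p.2) ∧
  (∀ t ∈ Icc (0:ℝ) T, MemH2w μ (η t) ∧ MemH2w μ (u t)) ∧
  (∀ t ∈ Icc (0:ℝ) T, ∀ x : ℝ,
    η t x = H t x + (∫ τ in (0:ℝ)..t, AD b (fun y => u τ y + η τ y * u τ y) x) ∧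
    u t x = U t x + (∫ τ in (0:ℝ)..t, AD b (fun y => η τ y + (u τ y)^2 / 2) x))

open Filter

lemma exists_abs_le_on_prod_of_continuous {f : ℝ → ℝ → ℝ} (hf : Continuous fun p : ℝ × ℝ => f p.1 p.2)
    {s t : Set ℝ} (hs : IsCompact s) (ht : IsCompact t) :
    ∃ C, ∀ a ∈ s, ∀ x ∈ t, |f a x| ≤ C := by
  obtain ⟨C, hC⟩ := (hs.prod ht).exists_bound_of_continuousOn hf.continuousOn
  exact ⟨C, fun a ha x hx => hC (a, x) ⟨ha, hx⟩⟩

theorem nonpos_of_volterra_step {α : Type*} {S : Set α} {T M K : ℝ} {D : ℝ → α → ℝ}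
    (hM : ∀ t ∈ Icc 0 T, ∀ x ∈ S, D t x ≤ M)
    (hstep : ∀ (n : ℕ) (c : ℝ), (∀ τ ∈ Icc 0 T, ∀ x ∈ S, D τ x ≤ c * τ ^ n) →
      ∀ t ∈ Icc 0 T, ∀ x ∈ S, D t x ≤ K * c * t ^ (n + 1) / (n + 1)) :
    ∀ t ∈ Icc 0 T, ∀ x ∈ S, D t x ≤ 0 := by
  have hpow : ∀ n : ℕ, ∀ t ∈ Icc 0 T, ∀ x ∈ S, D t x ≤ M * K ^ n / n.factorial * t ^ n := by
    intro n
    induction n with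
    | zero => simpa using hM
    | succ n ih =>
      intro t ht x hx
      convert hstep n _ ih t ht x hx using 1
      push_cast [Nat.factorial_succ]
      field_simp
      ring
  intro t ht x hx
  have hlim : Tendsto (fun n : ℕ => M * K ^ n / n.factorial * t ^ n) atTop (nhds 0) := by
    simpa using ((FloorSemiring.tendsto_pow_div_factorial_atTop (K * t)).const_mul M).congr
      fun n => by ring
  exact ge_of_tendsto hlim (Eventually.of_forall fun n => hpow n t ht x hx)

lemma abs_sub_add_mul_sub_le {η₁ u₁ η₂ u₂ B : ℝ} (hη₁ : |η₁| ≤ B) (hu₂ : |u₂| ≤ B) :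
    |(u₁ + η₁ * u₁) - (u₂ + η₂ * u₂)| ≤ (1 + B) * (|η₁ - η₂| + |u₁ - u₂|) := by
  calc |(u₁ + η₁ * u₁) - (u₂ + η₂ * u₂)|
      = |(1 + η₁) * (u₁ - u₂) + u₂ * (η₁ - η₂)| := by congr 1; ring
    _ ≤ |1 + η₁| * |u₁ - u₂| + |u₂| * |η₁ - η₂| := by
      rw [← abs_mul, ← abs_mul]; exact abs_add_le _ _
    _ ≤ (1 + B) * |u₁ - u₂| + B * |η₁ - η₂| := by
      have h1 : |1 + η₁| ≤ 1 + B := (abs_add_le _ _).trans (by rw [abs_one]; linarith)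
      gcongr
    _ ≤ (1 + B) * (|η₁ - η₂| + |u₁ - u₂|) := by
      nlinarith [abs_nonneg (η₁ - η₂), abs_nonneg u₂]

lemma abs_sub_add_sq_half_sub_le {η₁ u₁ η₂ u₂ B : ℝ} (hu₁ : |u₁| ≤ B) (hu₂ : |u₂| ≤ B) :
    |(η₁ + u₁ ^ 2 / 2) - (η₂ + u₂ ^ 2 / 2)| ≤ (1 + B) * (|η₁ - η₂| + |u₁ - u₂|) := by
  calc |(η₁ + u₁ ^ 2 / 2) - (η₂ + u₂ ^ 2 / 2)|
      = |(η₁ - η₂) + (u₁ + u₂) / 2 * (u₁ - u₂)| := by congr 1; ring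
    _ ≤ |η₁ - η₂| + |(u₁ + u₂) / 2| * |u₁ - u₂| := by
      rw [← abs_mul]; exact abs_add_le _ _
    _ ≤ |η₁ - η₂| + B * |u₁ - u₂| := by
      have h : |(u₁ + u₂) / 2| ≤ B := by
        rw [abs_div, abs_two, div_le_iff₀ two_pos]
        linarith [abs_add_le u₁ u₂]
      gcongr
    _ ≤ (1 + B) * (|η₁ - η₂| + |u₁ - u₂|) := by
      nlinarith [abs_nonneg (η₁ - η₂), abs_nonneg (u₁ - u₂), abs_nonneg u₁]

lemma continuous_deriv_wone (b : ℝ) : Continuous (deriv (wone b)) :=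
  (Real.contDiff_sinh.comp (by fun_prop : ContDiff ℝ 1 fun x : ℝ => (1 + x) / Real.sqrt b)
    ).continuous_deriv le_rfl

lemma continuous_deriv_wtwo (b : ℝ) : Continuous (deriv (wtwo b)) :=
  (Real.contDiff_sinh.comp (by fun_prop : ContDiff ℝ 1 fun x : ℝ => (1 - x) / Real.sqrt b)
    ).continuous_deriv le_rfl

lemma measurable_Gxi (b x : ℝ) : Measurable (Gxi b x) := by
  have h₁ := continuous_deriv_wone b
  have h₂ := continuous_deriv_wtwo b
  exact Measurable.ite (measurableSet_le measurable_id measurable_const)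
    (by fun_prop) (by fun_prop)

lemma exists_abs_Gxi_le (b : ℝ) :
    ∃ C, ∀ x ∈ Icc (-1:ℝ) 1, ∀ ξ ∈ Icc (-1:ℝ) 1, |Gxi b x ξ| ≤ C := by
  have h₁ := continuous_deriv_wone b
  have h₂ := continuous_deriv_wtwo b
  obtain ⟨C, hC⟩ := exists_abs_le_on_prod_of_continuous (f := fun x ξ =>
      |-(1 / (b * Wron b)) * deriv (wone b) ξ * wtwo b x| +
      |-(1 / (b * Wron b)) * wone b x * deriv (wtwo b) ξ|)
    (by unfold wone wtwo at *; fun_prop) isCompact_Icc isCompact_Icc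
  refine ⟨C, fun x hx ξ hξ => le_trans ?_ ((le_abs_self _).trans (hC x hx ξ hξ))⟩
  unfold Gxi
  split_ifs <;> simp only [le_add_iff_nonneg_right, le_add_iff_nonneg_left, abs_nonneg]

section KernelBound

variable {b C : ℝ} (hC : ∀ x ∈ Icc (-1:ℝ) 1, ∀ ξ ∈ Icc (-1:ℝ) 1, |Gxi b x ξ| ≤ C)
include hC

lemma integrableOn_Gxi_mul {x : ℝ} (hx : x ∈ Icc (-1:ℝ) 1) {f : ℝ → ℝ} (hf : Continuous f) :
    IntegrableOn (fun ξ => Gxi b x ξ * f ξ) (Ioo (-1:ℝ) 1) := by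
  refine (hf.integrableOn_Icc.mono_set Ioo_subset_Icc_self).bdd_mul
    (measurable_Gxi b x).aestronglyMeasurable (c := C) ?_
  rw [ae_restrict_iff' measurableSet_Ioo]
  exact Eventually.of_forall fun ξ hξ => hC x hx ξ (Ioo_subset_Icc_self hξ)

lemma AD_sub {x : ℝ} (hx : x ∈ Icc (-1:ℝ) 1) {f g : ℝ → ℝ} (hf : Continuous f)
    (hg : Continuous g) : AD b f x - AD b g x = AD b (fun y => f y - g y) x := by
  rw [AD, AD, ← integral_sub (integrableOn_Gxi_mul hC hx hf) (integrableOn_Gxi_mul hC hx hg)]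
  simp only [AD, mul_sub]

lemma abs_AD_le {x : ℝ} (hx : x ∈ Icc (-1:ℝ) 1) {f : ℝ → ℝ} {R : ℝ}
    (hR : ∀ ξ ∈ Ioo (-1:ℝ) 1, |f ξ| ≤ R) : |AD b f x| ≤ 2 * C * R := by
  have hC0 : 0 ≤ C := (abs_nonneg _).trans (hC x hx x hx)
  have h := norm_setIntegral_le_of_norm_le_const (C := C * R) (f := fun ξ => Gxi b x ξ * f ξ)
    (measure_Ioo_lt_top (μ := volume)) fun ξ hξ => by
      rw [Real.norm_eq_abs, abs_mul]
      exact mul_le_mul (hC x hx ξ (Ioo_subset_Icc_self hξ)) (hR ξ hξ) (abs_nonneg _) hC0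
  rw [Real.volume_real_Ioo_of_le (by norm_num), Real.norm_eq_abs] at h
  calc |AD b f x| ≤ C * R * (1 - -1) := h
    _ = 2 * C * R := by ring

lemma continuous_AD_apply {x : ℝ} (hx : x ∈ Icc (-1:ℝ) 1) {g : ℝ → ℝ → ℝ}
    (hg : Continuous fun p : ℝ × ℝ => g p.1 p.2) : Continuous fun τ => AD b (g τ) x := by
  rw [continuous_iff_continuousAt]
  intro τ₀
  obtain ⟨R, hR⟩ := exists_abs_le_on_prod_of_continuous hg (isCompact_Icc (a := τ₀ - 1) (b := τ₀ + 1))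
    (isCompact_Icc (a := -1) (b := 1))
  have hC0 : 0 ≤ C := (abs_nonneg _).trans (hC x hx x hx)
  refine continuousAt_of_dominated (bound := fun _ => C * R) ?_ ?_ ?_ ?_
  · exact Eventually.of_forall fun τ =>
      ((measurable_Gxi b x).mul (hg.comp (by fun_prop : Continuous fun y : ℝ => (τ, y))
        ).measurable).aestronglyMeasurable
  · filter_upwards [Icc_mem_nhds (by linarith : τ₀ - 1 < τ₀) (by linarith : τ₀ < τ₀ + 1)]
      with τ hτ
    rw [ae_restrict_iff' measurableSet_Ioo]
    refine Eventually.of_forall fun ξ hξ => ?_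
    rw [Real.norm_eq_abs, abs_mul]
    exact mul_le_mul (hC x hx ξ (Ioo_subset_Icc_self hξ)) (hR τ hτ ξ (Ioo_subset_Icc_self hξ))
      (abs_nonneg _) hC0
  · exact integrableOn_const (by simp)
  · exact Eventually.of_forall fun ξ =>
      (continuous_const.mul (hg.comp (by fun_prop : Continuous fun τ : ℝ => (τ, ξ)))).continuousAt

lemma integral_AD_sub {x : ℝ} (hx : x ∈ Icc (-1:ℝ) 1) {F₁ F₂ : ℝ → ℝ → ℝ}
    (hF₁ : Continuous fun p : ℝ × ℝ => F₁ p.1 p.2)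
    (hF₂ : Continuous fun p : ℝ × ℝ => F₂ p.1 p.2) (t : ℝ) :
    (∫ τ in (0:ℝ)..t, AD b (F₁ τ) x) - (∫ τ in (0:ℝ)..t, AD b (F₂ τ) x) =
      ∫ τ in (0:ℝ)..t, AD b (fun y => F₁ τ y - F₂ τ y) x := by
  rw [← intervalIntegral.integral_sub ((continuous_AD_apply hC hx hF₁).intervalIntegrable 0 t)
    ((continuous_AD_apply hC hx hF₂).intervalIntegrable 0 t)]
  congr 1 with τ
  exact AD_sub hC hx (hF₁.comp (by fun_prop : Continuous fun y : ℝ => (τ, y)))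
    (hF₂.comp (by fun_prop : Continuous fun y : ℝ => (τ, y)))

lemma abs_integral_AD_le {x t c : ℝ} (hx : x ∈ Icc (-1:ℝ) 1) (ht : 0 ≤ t) {n : ℕ}
    {F : ℝ → ℝ → ℝ} (hF : ∀ τ ∈ Ioc 0 t, ∀ ξ ∈ Ioo (-1:ℝ) 1, |F τ ξ| ≤ c * τ ^ n) :
    |∫ τ in (0:ℝ)..t, AD b (F τ) x| ≤ 2 * C * c * t ^ (n + 1) / (n + 1) := by
  have h := intervalIntegral.norm_integral_le_of_norm_le (μ := volume) ht
    (Eventually.of_forall fun τ hτ => (Real.norm_eq_abs _).trans_le (abs_AD_le hC hx (hF τ hτ)))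
    ((by fun_prop : Continuous fun τ : ℝ => 2 * C * (c * τ ^ n)).intervalIntegrable 0 t)
  rw [intervalIntegral.integral_const_mul, intervalIntegral.integral_const_mul,
    integral_pow] at h
  simpa [mul_div_assoc, mul_assoc] using h

end KernelBound

section TwoSolutions

variable {T b μ C B : ℝ} {H U η₁ u₁ η₂ u₂ : ℝ → ℝ → ℝ}

lemma IsSolBBM.sub_eq_integral_AD (h₁ : IsSolBBM T b μ H U η₁ u₁)
    (h₂ : IsSolBBM T b μ H U η₂ u₂)
    (hC : ∀ x ∈ Icc (-1:ℝ) 1, ∀ ξ ∈ Icc (-1:ℝ) 1, |Gxi b x ξ| ≤ C)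
    {t x : ℝ} (ht : t ∈ Icc 0 T) (hx : x ∈ Icc (-1:ℝ) 1) :
    η₁ t x - η₂ t x = ∫ τ in (0:ℝ)..t,
      AD b (fun y => (u₁ τ y + η₁ τ y * u₁ τ y) - (u₂ τ y + η₂ τ y * u₂ τ y)) x ∧
    u₁ t x - u₂ t x = ∫ τ in (0:ℝ)..t,
      AD b (fun y => (η₁ τ y + u₁ τ y ^ 2 / 2) - (η₂ τ y + u₂ τ y ^ 2 / 2)) x := by
  obtain ⟨hη₁, hu₁, -, hsol₁⟩ := h₁
  obtain ⟨hη₂, hu₂, -, hsol₂⟩ := h₂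
  rw [(hsol₁ t ht x).1, (hsol₂ t ht x).1, (hsol₁ t ht x).2, (hsol₂ t ht x).2,
    add_sub_add_left_eq_sub, add_sub_add_left_eq_sub]
  exact ⟨integral_AD_sub hC hx (hu₁.add (hη₁.mul hu₁)) (hu₂.add (hη₂.mul hu₂)) t,
    integral_AD_sub hC hx (hη₁.add ((hu₁.pow 2).div_const 2))
      (hη₂.add ((hu₂.pow 2).div_const 2)) t⟩

lemma IsSolBBM.volterra_step (h₁ : IsSolBBM T b μ H U η₁ u₁) (h₂ : IsSolBBM T b μ H U η₂ u₂)
    (hC : ∀ x ∈ Icc (-1:ℝ) 1, ∀ ξ ∈ Icc (-1:ℝ) 1, |Gxi b x ξ| ≤ C)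
    (hB : ∀ t ∈ Icc 0 T, ∀ x ∈ Icc (-1:ℝ) 1, |η₁ t x| + |u₁ t x| + |u₂ t x| ≤ B)
    (n : ℕ) (c : ℝ)
    (hD : ∀ τ ∈ Icc 0 T, ∀ ξ ∈ Icc (-1:ℝ) 1, |η₁ τ ξ - η₂ τ ξ| + |u₁ τ ξ - u₂ τ ξ| ≤ c * τ ^ n) :
    ∀ t ∈ Icc 0 T, ∀ x ∈ Icc (-1:ℝ) 1, |η₁ t x - η₂ t x| + |u₁ t x - u₂ t x| ≤
      4 * C * (1 + B) * c * t ^ (n + 1) / (n + 1) := by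
  intro t ht x hx
  have hF : ∀ τ ∈ Ioc 0 t, ∀ ξ ∈ Ioo (-1:ℝ) 1,
      |(u₁ τ ξ + η₁ τ ξ * u₁ τ ξ) - (u₂ τ ξ + η₂ τ ξ * u₂ τ ξ)| ≤ (1 + B) * c * τ ^ n ∧
      |(η₁ τ ξ + u₁ τ ξ ^ 2 / 2) - (η₂ τ ξ + u₂ τ ξ ^ 2 / 2)| ≤ (1 + B) * c * τ ^ n := by
    intro τ hτ ξ hξ
    have hτ' : τ ∈ Icc 0 T := ⟨hτ.1.le, hτ.2.trans ht.2⟩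
    have hBτ := hB τ hτ' ξ (Ioo_subset_Icc_self hξ)
    have hDτ := hD τ hτ' ξ (Ioo_subset_Icc_self hξ)
    have := abs_nonneg (η₁ τ ξ); have := abs_nonneg (u₁ τ ξ); have := abs_nonneg (u₂ τ ξ)
    have hB1 : 0 ≤ 1 + B := by linarith
    rw [mul_assoc]
    exact ⟨(abs_sub_add_mul_sub_le (B := B) (by linarith) (by linarith)).trans (by gcongr),
      (abs_sub_add_sq_half_sub_le (B := B) (by linarith) (by linarith)).trans (by gcongr)⟩
  obtain ⟨hdη, hdu⟩ := h₁.sub_eq_integral_AD h₂ hC ht hx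
  rw [hdη, hdu]
  have hη := abs_integral_AD_le hC hx ht.1 fun τ hτ ξ hξ => (hF τ hτ ξ hξ).1
  have hu := abs_integral_AD_le hC hx ht.1 fun τ hτ ξ hξ => (hF τ hτ ξ hξ).2
  calc _ ≤ 2 * C * ((1 + B) * c) * t ^ (n + 1) / (n + 1) +
        2 * C * ((1 + B) * c) * t ^ (n + 1) / (n + 1) := add_le_add hη hu
    _ = 4 * C * (1 + B) * c * t ^ (n + 1) / (n + 1) := by ring

end TwoSolutions

theorem uniqueness_integral_system_c_zero_general (T b μ : ℝ) (H U : ℝ → ℝ → ℝ)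
    (η₁ u₁ η₂ u₂ : ℝ → ℝ → ℝ)
    (h1 : IsSolBBM T b μ H U η₁ u₁) (h2 : IsSolBBM T b μ H U η₂ u₂) :
    ∀ t ∈ Icc (0:ℝ) T, ∀ x ∈ Icc (-1:ℝ) 1, η₁ t x = η₂ t x ∧ u₁ t x = u₂ t x := by
  have ⟨hη₁, hu₁, _⟩ := h1
  have ⟨hη₂, hu₂, _⟩ := h2
  obtain ⟨C, hC⟩ := exists_abs_Gxi_le b
  obtain ⟨B, hB⟩ := exists_abs_le_on_prod_of_continuous (f := fun t x => |η₁ t x| + |u₁ t x| + |u₂ t x|)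
    (by fun_prop) (isCompact_Icc (a := 0) (b := T)) (isCompact_Icc (a := -1) (b := 1))
  obtain ⟨M, hM⟩ := exists_abs_le_on_prod_of_continuous
    (f := fun t x => |η₁ t x - η₂ t x| + |u₁ t x - u₂ t x|)
    (by fun_prop) (isCompact_Icc (a := 0) (b := T)) (isCompact_Icc (a := -1) (b := 1))
  have hD := nonpos_of_volterra_step (fun t ht x hx => (le_abs_self _).trans (hM t ht x hx))
    (h1.volterra_step h2 hC fun t ht x hx => (le_abs_self _).trans (hB t ht x hx))
  intro t ht x hx
  have hDtx := hD t ht x hx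
  have := abs_nonneg (η₁ t x - η₂ t x); have := abs_nonneg (u₁ t x - u₂ t x)
  exact ⟨sub_eq_zero.1 (abs_nonpos_iff.1 (by linarith)),
    sub_eq_zero.1 (abs_nonpos_iff.1 (by linarith))⟩

/-- uniqueness for the integral formulation when `c = 0`:
two solutions in `C([0,T];H²_w) × C([0,T];H²_w)` with the same data `H,U` coincide. -/
theorem uniqueness_integral_system_c_zero (T b μ : ℝ) (hT : 0 < T) (hb : 0 < b)
    (hμ₁ : -1 < μ) (hμ₂ : μ < 1) (H U : ℝ → ℝ → ℝ)
    (η₁ u₁ η₂ u₂ : ℝ → ℝ → ℝ)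
    (h1 : IsSolBBM T b μ H U η₁ u₁) (h2 : IsSolBBM T b μ H U η₂ u₂) :
    ∀ t ∈ Icc (0:ℝ) T, ∀ x ∈ Icc (-1:ℝ) 1, η₁ t x = η₂ t x ∧ u₁ t x = u₂ t x :=
  uniqueness_integral_system_c_zero_general T b μ H U η₁ u₁ η₂ u₂ h1 h2
end

section
/- For a Runge–Kutta method with stability function $R(z)$, define the dispersion error $\Phi(y)=y-\arg R(iy)$ and say the method has dispersion order $q$ if $\Phi(y)=O(y^{q+1})$ as $y\to0$. If the method has consistency order $p$ (i.e. $R(z)=e^z+O(z^{p+1})$), then the dispersion order $q$ satisfies $q=p$ if $p$ is even and $q\ge p+1$ if $p$ is odd. -/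
/-!
Write `ρ(z) = R(z) e^{-z}` (`expRatio R`). Exact consistency order `p` means
`ρ(z) - 1 = z^(p+1) e(z)` with `e` analytic and `e(0) ≠ 0`. Since `arg R(iy) = y + arg ρ(iy)` and
`arg w ~ Im w` as `w → 1`, the dispersion error has the size of `Im ρ(iy)`. As `R` has real
coefficients, `ρ(-iy)` is the conjugate of `ρ(iy)`, so
`2i Im ρ(iy) = ρ(iy) - ρ(-iy) = (iy)^(p+1) (e(iy) + (-1)^p e(-iy))`.
For even `p` the bracket tends to `2 e(0) ≠ 0`; for odd `p` it is `e(iy) - e(-iy) = O(y)`.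
-/

open Asymptotics Filter Complex Topology ComplexConjugate
open scoped Real

theorem Filter.Tendsto.isTheta_const {α F : Type*} [NormedAddCommGroup F] {l : Filter α}
    {f : α → F} {c : F} (hf : Tendsto f l (𝓝 c)) (hc : c ≠ 0) : f =Θ[l] fun _ => c := by
  refine ⟨(hf.isBigO_one ℝ).trans (isBigO_const_const _ hc l),
    (isBigO_const_left_iff_pos_le_norm hc).2 ⟨‖c‖ / 2, by positivity, ?_⟩⟩
  exact hf.norm.eventually (eventually_ge_nhds (half_lt_self (norm_pos_iff.2 hc)))

section PowerAsymptotics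

variable {𝕜 E : Type*} [NontriviallyNormedField 𝕜] [NormedAddCommGroup E] [NormedSpace 𝕜 E]

theorem not_isBigO_pow_pow_of_lt {m n : ℕ} (h : m < n) :
    ¬ (fun x : 𝕜 => x ^ m) =O[𝓝 0] fun x => x ^ n := by
  have hne : ∀ᶠ x in 𝓝[≠] (0 : 𝕜), x ^ n ≠ 0 :=
    eventually_mem_nhdsWithin.mono fun x hx => pow_ne_zero n hx
  exact (isLittleO_pow_pow h).not_isBigO (hne.frequently.filter_mono nhdsWithin_le_nhds)

theorem isTheta_pow_smul {g : 𝕜 → E} {c : E} (hg : Tendsto g (𝓝 0) (𝓝 c)) (hc : c ≠ 0)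
    (n : ℕ) :
    (fun z => z ^ n • g z) =Θ[𝓝 0] fun z => z ^ n := by
  simpa using (isTheta_refl (fun z : 𝕜 => z ^ n) _).smul
    ((hg.isTheta_const hc).trans (isTheta_const_const hc (one_ne_zero (α := 𝕜))))

theorem AnalyticAt.isBigO_pow_iff_natCast_le_analyticOrderAt {f : 𝕜 → E}
    (hf : AnalyticAt 𝕜 f 0) {n : ℕ} :
    f =O[𝓝 0] (fun z => z ^ n) ↔ n ≤ analyticOrderAt f 0 := by
  constructor
  · intro hO
    by_contra! hlt
    obtain ⟨m, hm⟩ := ENat.ne_top_iff_exists.mp (hlt.trans (ENat.natCast_lt_top n)).ne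
    obtain ⟨g, hg, hg0, hfg⟩ := hf.analyticOrderAt_eq_natCast.mp hm.symm
    have hfg' : f =ᶠ[𝓝 0] fun z => z ^ m • g z := hfg.mono fun z hz => by rwa [sub_zero] at hz
    have hpow : (fun z : 𝕜 => z ^ m) =O[𝓝 0] fun z => z ^ n :=
      (isTheta_pow_smul hg.continuousAt.tendsto hg0 m).symm.isBigO.trans
        (hfg'.symm.isBigO.trans hO)
    exact not_isBigO_pow_pow_of_lt (by exact_mod_cast hm ▸ hlt) hpow
  · intro hle
    obtain ⟨g, hg, hfg⟩ := (natCast_le_analyticOrderAt hf).mp hle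
    have : (fun z : 𝕜 => z ^ n • g z) =O[𝓝 0] fun z => z ^ n • (1 : 𝕜) :=
      (isBigO_refl _ _).smul (hg.continuousAt.tendsto.isBigO_one 𝕜)
    have hfg' : f =ᶠ[𝓝 0] fun z => z ^ n • g z := hfg.mono fun z hz => by rwa [sub_zero] at hz
    simpa using hfg'.isBigO.trans this

theorem AnalyticAt.analyticOrderAt_eq_of_isBigO_of_not_isBigO {f : 𝕜 → E}
    (hf : AnalyticAt 𝕜 f 0) {n : ℕ} (h : f =O[𝓝 0] (fun z => z ^ n))
    (h' : ¬ f =O[𝓝 0] (fun z => z ^ (n + 1))) : analyticOrderAt f 0 = n := by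
  rw [hf.isBigO_pow_iff_natCast_le_analyticOrderAt] at h h'
  push_cast at h'
  exact le_antisymm (Order.le_of_lt_add_one (not_le.mp h')) h

theorem eventually_sub_comp_neg_eq_pow_smul {f e : 𝕜 → E} {n : ℕ}
    (h : ∀ᶠ z in 𝓝 0, f z = z ^ n • e z) :
    (fun z => f z - f (-z)) =ᶠ[𝓝 0] fun z => z ^ n • (e z - (-1 : 𝕜) ^ n • e (-z)) := by
  filter_upwards [h, (continuous_neg.tendsto' (0 : 𝕜) 0 neg_zero).eventually h] with z hz hnz
  rw [hz, hnz, neg_pow, smul_sub, mul_comm, mul_smul]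

theorem isBigO_sub_comp_neg {e : 𝕜 → E} (he : DifferentiableAt 𝕜 e 0) :
    (fun z => e z - e (-z)) =O[𝓝 0] fun z => z := by
  have h := he.hasFDerivAt.isBigO_sub
  simp only [sub_zero] at h
  have hneg : (fun z : 𝕜 => e (-z) - e 0) =O[𝓝 0] fun z => z :=
    (h.comp_tendsto (continuous_neg.tendsto' (0 : 𝕜) 0 neg_zero)).trans
      (isBigO_of_le _ fun z => by simp)
  simpa using h.sub hneg

theorem Odd.isTheta_sub_comp_neg_pow [CharZero 𝕜] {f e : 𝕜 → E} {n : ℕ} (hn : Odd n)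
    (h : ∀ᶠ z in 𝓝 0, f z = z ^ n • e z) (he : ContinuousAt e 0) (he0 : e 0 ≠ 0) :
    (fun z => f z - f (-z)) =Θ[𝓝 0] fun z => z ^ n := by
  have hodd := eventually_sub_comp_neg_eq_pow_smul h
  simp only [hn.neg_one_pow, neg_one_smul, sub_neg_eq_add] at hodd
  have hneg : Tendsto (fun z => e (-z)) (𝓝 0) (𝓝 (e 0)) :=
    he.tendsto.comp (continuous_neg.tendsto' 0 0 neg_zero)
  have hlim : Tendsto (fun z => e z + e (-z)) (𝓝 0) (𝓝 ((2 : 𝕜) • e 0)) := by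
    rw [two_smul]
    exact he.tendsto.add hneg
  exact hodd.isTheta.trans (isTheta_pow_smul hlim (smul_ne_zero two_ne_zero he0) n)

theorem Even.isBigO_sub_comp_neg_pow_succ {f e : 𝕜 → E} {n : ℕ} (hn : Even n)
    (h : ∀ᶠ z in 𝓝 0, f z = z ^ n • e z) (he : DifferentiableAt 𝕜 e 0) :
    (fun z => f z - f (-z)) =O[𝓝 0] fun z => z ^ (n + 1) := by
  have hodd := eventually_sub_comp_neg_eq_pow_smul h
  simp only [hn.neg_one_pow, one_smul] at hodd
  simpa [pow_succ, mul_smul] using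
    hodd.isBigO.trans ((isBigO_refl (fun z : 𝕜 => z ^ n) _).smul (isBigO_sub_comp_neg he))

end PowerAsymptotics

namespace Complex

theorem isEquivalent_arg_im : arg ~[𝓝 1] im := by
  have harg : Tendsto arg (𝓝 1) (𝓝 0) := by
    simpa using (continuousAt_arg (by simp : (1 : ℂ) ∈ slitPlane)).tendsto
  have hnorm : (fun w : ℂ => ‖w‖) ~[𝓝 1] 1 :=
    (isEquivalent_const_iff_tendsto one_ne_zero).2
      (by simpa using continuous_norm.tendsto (1 : ℂ))
  have h := hnorm.mul (Real.isEquivalent_sin.comp_tendsto harg)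
  have him : (fun w : ℂ => ‖w‖) * (Real.sin ∘ arg) = im := by
    ext w
    exact norm_mul_sin_arg w
  rw [him, one_mul, Function.id_comp] at h
  exact h.symm

theorem arg_exp_mul_I_mul {θ : ℝ} {w : ℂ} (hw : w ≠ 0) (hθ : θ ∈ Set.Ioc (-π) π)
    (h : θ + arg w ∈ Set.Ioc (-π) π) : arg (exp (θ * I) * w) = θ + arg w := by
  have harg : arg (exp (θ * I)) = θ := by
    rw [arg_exp_mul_I, toIocMod_eq_self]
    rwa [show -π + 2 * π = π by ring]
  rw [arg_mul (exp_ne_zero _) hw (by rwa [harg]), harg]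

theorem conj_eval_map_ofReal (P : Polynomial ℝ) (z : ℂ) :
    conj ((P.map (algebraMap ℝ ℂ)).eval z) = (P.map (algebraMap ℝ ℂ)).eval (conj z) := by
  rw [Polynomial.eval_map, Polynomial.eval_map, Polynomial.hom_eval₂]
  congr 1
  ext x
  simp

theorem tendsto_ofReal_mul_I : Tendsto (fun y : ℝ => (y : ℂ) * I) (𝓝 0) (𝓝 0) := by
  have : Continuous fun y : ℝ => (y : ℂ) * I := by fun_prop
  simpa using this.tendsto 0

end Complex

open Complex

theorem Asymptotics.IsTheta.comp_ofReal_mul_I {E : Type*} [NormedAddCommGroup E] {f : ℂ → E}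
    {n : ℕ} (h : f =Θ[𝓝 0] fun z => z ^ n) :
    (fun y : ℝ => f (y * I)) =Θ[𝓝 0] fun y => y ^ n := by
  have hcomp : (fun y : ℝ => f (y * I)) =Θ[𝓝 0] fun y => ((y : ℂ) * I) ^ n :=
    ⟨h.1.comp_tendsto tendsto_ofReal_mul_I, h.2.comp_tendsto tendsto_ofReal_mul_I⟩
  exact hcomp.trans (IsTheta.of_norm_eventuallyEq_norm (Eventually.of_forall fun y => by simp))

theorem Asymptotics.IsBigO.comp_ofReal_mul_I {E : Type*} [NormedAddCommGroup E] {f : ℂ → E}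
    {n : ℕ} (h : f =O[𝓝 0] fun z => z ^ n) :
    (fun y : ℝ => f (y * I)) =O[𝓝 0] fun y => y ^ n :=
  (h.comp_tendsto tendsto_ofReal_mul_I).trans (isBigO_of_le _ fun y => by simp)

noncomputable def expRatio (R : ℂ → ℂ) (z : ℂ) : ℂ := R z * exp (-z)

theorem expRatio_sub_one_isTheta (R : ℂ → ℂ) :
    (fun z => expRatio R z - 1) =Θ[𝓝 0] fun z => R z - exp z := by
  have hexp : (fun z : ℂ => exp (-z)) =Θ[𝓝 0] fun _ => (1 : ℂ) := by
    refine Tendsto.isTheta_const ?_ one_ne_zero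
    simpa using (by fun_prop : Continuous fun z : ℂ => exp (-z)).tendsto 0
  have h := (isTheta_refl (fun z => R z - exp z) _).mul hexp
  simp only [mul_one] at h
  refine (EventuallyEq.isTheta (Eventually.of_forall fun z => ?_)).trans h
  simp only [expRatio, sub_mul, ← exp_add, add_neg_cancel, exp_zero]

section Dispersion

variable {R : ℂ → ℂ}

theorem tendsto_expRatio_ofReal_mul_I (hR : ContinuousAt R 0) (hR0 : R 0 = 1) :
    Tendsto (fun y : ℝ => expRatio R (y * I)) (𝓝 0) (𝓝 1) := by
  have h : ContinuousAt (expRatio R) 0 := hR.mul (continuous_exp.comp continuous_neg).continuousAt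
  simpa [Function.comp_def, expRatio, hR0] using h.tendsto.comp tendsto_ofReal_mul_I

theorem sub_arg_eventuallyEq_neg_arg_expRatio (hR : ContinuousAt R 0) (hR0 : R 0 = 1) :
    (fun y : ℝ => y - arg (R (y * I))) =ᶠ[𝓝 0] fun y => -arg (expRatio R (y * I)) := by
  have hlim := tendsto_expRatio_ofReal_mul_I hR hR0
  have harg : Tendsto (fun y : ℝ => arg (expRatio R (y * I))) (𝓝 0) (𝓝 0) := by
    simpa [Function.comp_def] using
      (continuousAt_arg (by simp : (1 : ℂ) ∈ slitPlane)).tendsto.comp hlim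
  filter_upwards [hlim.eventually_ne one_ne_zero,
    harg.eventually (Ioo_mem_nhds neg_one_lt_zero one_pos),
    Ioo_mem_nhds neg_one_lt_zero one_pos] with y hne harg hy
  have hRy : R (y * I) = exp (y * I) * expRatio R (y * I) := by
    rw [expRatio, mul_left_comm, ← exp_add, add_neg_cancel, exp_zero, mul_one]
  have hπ := Real.pi_gt_three
  rw [hRy, arg_exp_mul_I_mul hne]
  · ring
  · constructor <;> linarith [hy.1, hy.2]
  · constructor <;> linarith [hy.1, hy.2, harg.1, harg.2]

theorem expRatio_ofReal_mul_I_sub_neg (hconj : ∀ z, conj (R z) = R (conj z)) (y : ℝ) :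
    expRatio R (y * I) - expRatio R (-(y * I)) = (2 * (expRatio R (y * I)).im : ℝ) * I := by
  have h : conj (expRatio R (y * I)) = expRatio R (-(y * I)) := by
    simp [expRatio, hconj, ← exp_conj]
  rw [← h, sub_conj]

theorem isTheta_dispersion (hR : ContinuousAt R 0) (hR0 : R 0 = 1)
    (hconj : ∀ z, conj (R z) = R (conj z)) :
    (fun y : ℝ => y - arg (R (y * I))) =Θ[𝓝 0]
      fun y => expRatio R (y * I) - expRatio R (-(y * I)) := by
  have harg : (fun y : ℝ => -arg (expRatio R (y * I))) =Θ[𝓝 0]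
      fun y => (expRatio R (y * I)).im :=
    (IsTheta.of_norm_eventuallyEq_norm (by simp)).trans
      (isEquivalent_arg_im.comp_tendsto (tendsto_expRatio_ofReal_mul_I hR hR0)).isTheta
  have him : (fun y : ℝ => (expRatio R (y * I)).im) =Θ[𝓝 0]
      fun y => expRatio R (y * I) - expRatio R (-(y * I)) := by
    refine ((isTheta_const_mul_left (two_ne_zero (α := ℝ))).2 isTheta_rfl).symm.trans
      (IsTheta.of_norm_eventuallyEq_norm (Eventually.of_forall fun y => ?_))
    simp [expRatio_ofReal_mul_I_sub_neg hconj]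
  exact (sub_arg_eventuallyEq_neg_arg_expRatio hR hR0).trans_isTheta (harg.trans him)

end Dispersion

/-- Koto's lemma: for a Runge-Kutta method with rational (real)
stability function `R` of exact consistency order `p`
(`R(z) = e^z + O(z^{p+1})`, not `O(z^{p+2})`), the dispersion error
`Φ(y) = y - arg R(iy)` satisfies: dispersion order `q = p` if `p` is even,
and `q ≥ p + 1` if `p` is odd. -/
theorem koto_dispersion_order (P Q : Polynomial ℝ) (p : ℕ) (hQ : Q.coeff 0 ≠ 0)
    (R : ℂ → ℂ)
    (hR : ∀ z : ℂ, R z =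
      (P.map (algebraMap ℝ ℂ)).eval z / (Q.map (algebraMap ℝ ℂ)).eval z)
    (hcons : (fun z : ℂ => R z - Complex.exp z) =O[nhds 0] fun z => z ^ (p + 1))
    (hexact : ¬ ((fun z : ℂ => R z - Complex.exp z) =O[nhds 0] fun z => z ^ (p + 2))) :
    (Even p →
      ((fun y : ℝ => y - Complex.arg (R ((y : ℂ) * Complex.I)))
          =O[nhds 0] fun y => y ^ (p + 1)) ∧
      ¬ ((fun y : ℝ => y - Complex.arg (R ((y : ℂ) * Complex.I)))
          =O[nhds 0] fun y => y ^ (p + 2))) ∧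
    (Odd p →
      (fun y : ℝ => y - Complex.arg (R ((y : ℂ) * Complex.I)))
        =O[nhds 0] fun y => y ^ (p + 2)) := by
  have hRan : AnalyticAt ℂ R 0 := by
    have hQ0 : (Q.map (algebraMap ℝ ℂ)).eval 0 ≠ 0 := by
      rwa [← Polynomial.coeff_zero_eq_eval_zero, Polynomial.coeff_map, map_ne_zero]
    rw [funext hR]
    exact ((Polynomial.differentiable _).analyticAt 0).div
      ((Polynomial.differentiable _).analyticAt 0) hQ0
  have hconj (z : ℂ) : conj (R z) = R (conj z) := by
    rw [hR, hR, map_div₀, conj_eval_map_ofReal, conj_eval_map_ofReal]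
  have hρ : AnalyticAt ℂ (fun z => expRatio R z - 1) 0 := by
    unfold expRatio
    fun_prop
  obtain ⟨e, he, he0, hρe⟩ := hρ.analyticOrderAt_eq_natCast.mp <|
    hρ.analyticOrderAt_eq_of_isBigO_of_not_isBigO
      ((expRatio_sub_one_isTheta R).trans_isBigO hcons)
      fun h => hexact ((expRatio_sub_one_isTheta R).symm.trans_isBigO h)
  simp only [sub_zero] at hρe
  have hR0 : R 0 = 1 := by simpa [expRatio, sub_eq_zero] using hρe.self_of_nhds
  have hΦ := isTheta_dispersion hRan.continuousAt hR0 hconj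
  refine ⟨fun hp => ?_, fun hp => ?_⟩
  · have hG := hp.add_one.isTheta_sub_comp_neg_pow hρe he.continuousAt he0
    simp only [sub_sub_sub_cancel_right] at hG
    have hΦ' := hΦ.trans hG.comp_ofReal_mul_I
    exact ⟨hΦ'.isBigO,
      fun h => not_isBigO_pow_pow_of_lt (Nat.lt_succ_self _) (hΦ'.symm.isBigO.trans h)⟩
  · have hG := hp.add_one.isBigO_sub_comp_neg_pow_succ hρe he.differentiableAt
    simp only [sub_sub_sub_cancel_right] at hG
    exact hΦ.trans_isBigO hG.comp_ofReal_mul_I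
end

section
/- For $\theta^2\in(7/9,1)$, the pair $\eta_s(x,t)=\eta_0\,\mathrm{sech}^2(\lambda(x-c_st-x_0))$, $u_s(x,t)=B\,\eta_s(x,t)$ with $\eta_0=\frac92\frac{\theta^2-7/9}{1-\theta^2}$, $c_s=\frac{4(\theta^2-2/3)}{\sqrt{2(1-\theta^2)(\theta^2-1/3)}}$, $\lambda=\frac12\sqrt{\frac{3(\theta^2-7/9)}{(\theta^2-1/3)(\theta^2-2/3)}}$, $B=\sqrt{\frac{2(1-\theta^2)}{\theta^2-1/3}}$, is an exact classical solution of the Bona–Smith system $\eta_t+u_x+(\eta u)_x-b\eta_{xxt}=0$, $u_t+\eta_x+uu_x+c\eta_{xxx}-bu_{xxt}=0$ with $b=\frac{3\theta^2-1}{6}$ and $c=\frac{2-3\theta^2}{3}$. -/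
/-!
Writing `φ = sech²`, one has `φ'' = 4φ - 6φ²` and hence `φ''' = (4 - 12φ) φ'`. For a wave
`η = η₀ φ(λ(x - c_s t - x₀))`, `u = B η`, every term of either equation is therefore
`λ η₀ φ'` times a polynomial of degree one in `φ`, and the system reduces to the vanishing of its
two coefficients: four algebraic relations between `η₀, c_s, λ, B, b, c`, which the stated values
satisfy.
-/

noncomputable def sech (y : ℝ) : ℝ := 1 / Real.cosh y

open Real

noncomputable def sechSq (y : ℝ) : ℝ := sech y ^ 2

noncomputable def sechSq' (y : ℝ) : ℝ := -2 * sinh y / cosh y ^ 3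

noncomputable def sechSq'' (y : ℝ) : ℝ := 4 * sechSq y - 6 * sechSq y ^ 2

theorem hasDerivAt_sechSq (y : ℝ) : HasDerivAt sechSq (sechSq' y) y := by
  have hc : cosh y ≠ 0 := (cosh_pos y).ne'
  refine (((hasDerivAt_const y 1).fun_div (hasDerivAt_cosh y) hc).fun_pow 2).congr_deriv ?_
  norm_num [sechSq']
  field_simp

theorem hasDerivAt_sechSq' (y : ℝ) : HasDerivAt sechSq' (sechSq'' y) y := by
  have hc : cosh y ≠ 0 := (cosh_pos y).ne'
  refine (((hasDerivAt_sinh y).const_mul (-2)).fun_div ((hasDerivAt_cosh y).fun_pow 3)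
    (pow_ne_zero 3 hc)).congr_deriv ?_
  simp only [sechSq'', sechSq, sech, Nat.cast_ofNat]
  field_simp
  linear_combination -6 * cosh y ^ 2 * cosh_sq_sub_sinh_sq y

theorem hasDerivAt_sechSq'' (y : ℝ) :
    HasDerivAt sechSq'' ((4 - 12 * sechSq y) * sechSq' y) y := by
  refine (((hasDerivAt_sechSq y).const_mul 4).sub
    (((hasDerivAt_sechSq y).pow 2).const_mul 6)).congr_deriv ?_
  ring

section TravelingWave

variable {f f' : ℝ → ℝ} (hf : ∀ ξ, HasDerivAt f (f' ξ) ξ) (A l c x₀ : ℝ)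
include hf

theorem hasDerivAt_wave_space (t x : ℝ) :
    HasDerivAt (fun x => A * f (l * (x - c * t - x₀))) (A * l * f' (l * (x - c * t - x₀))) x := by
  have hξ : HasDerivAt (fun x => l * (x - c * t - x₀)) l x := by
    simpa using (((hasDerivAt_id x).sub_const (c * t)).sub_const x₀).const_mul l
  exact (((hf _).comp x hξ).const_mul A).congr_deriv (by ring)

theorem hasDerivAt_wave_time (x t : ℝ) :
    HasDerivAt (fun t => A * f (l * (x - c * t - x₀)))
      (-(A * l * c) * f' (l * (x - c * t - x₀))) t := by
  have hξ : HasDerivAt (fun t => l * (x - c * t - x₀)) (-(l * c)) t := by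
    simpa using ((((hasDerivAt_id t).const_mul c).const_sub x).sub_const x₀).const_mul l
  exact (((hf _).comp t hξ).const_mul A).congr_deriv (by ring)

theorem deriv_wave_space (t : ℝ) :
    deriv (fun x => A * f (l * (x - c * t - x₀))) = fun x => A * l * f' (l * (x - c * t - x₀)) :=
  funext fun x => (hasDerivAt_wave_space hf A l c x₀ t x).deriv

theorem deriv_wave_time (x : ℝ) :
    deriv (fun t => A * f (l * (x - c * t - x₀)))
      = fun t => -(A * l * c) * f' (l * (x - c * t - x₀)) :=
  funext fun t => (hasDerivAt_wave_time hf A l c x₀ x t).deriv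

end TravelingWave

theorem sech_sq_wave_solves_bona_smith {η₀ cs lam B b c : ℝ} (x₀ : ℝ)
    (h₁ : cs * (1 - 4 * b * lam ^ 2) = B) (h₂ : B * η₀ = 6 * b * lam ^ 2 * cs)
    (h₃ : B * cs = 1 + 4 * lam ^ 2 * (c + b * B * cs))
    (h₄ : B ^ 2 * η₀ = 12 * lam ^ 2 * (c + b * B * cs)) :
    let ηs : ℝ → ℝ → ℝ := fun x t => η₀ * (sech (lam * (x - cs * t - x₀)))^2
    let us : ℝ → ℝ → ℝ := fun x t => B * ηs x t
    ∀ x t : ℝ,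
      deriv (fun s => ηs x s) t + deriv (fun y => us y t) x
        + deriv (fun y => ηs y t * us y t) x
        - b * deriv (fun s => deriv (fun y => deriv (fun z => ηs z s) y) x) t = 0 ∧
      deriv (fun s => us x s) t + deriv (fun y => ηs y t) x
        + us x t * deriv (fun y => us y t) x
        + c * deriv (fun y => deriv (fun z => deriv (fun r => ηs r t) z) y) x
        - b * deriv (fun s => deriv (fun y => deriv (fun z => us z s) y) x) t = 0 := by
  intro ηs us x t
  have hη : ηs = fun x t => η₀ * sechSq (lam * (x - cs * t - x₀)) := rfl
  have hu : us = fun x t => (B * η₀) * sechSq (lam * (x - cs * t - x₀)) := by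
    funext x t
    simp only [us, hη]
    ring
  have hprod := (hasDerivAt_wave_space hasDerivAt_sechSq η₀ lam cs x₀ t x).fun_mul
    (hasDerivAt_wave_space hasDerivAt_sechSq (B * η₀) lam cs x₀ t x)
  simp only [hu, hη]
  rw [hprod.deriv]
  simp only [deriv_wave_space hasDerivAt_sechSq, deriv_wave_space hasDerivAt_sechSq',
    deriv_wave_space hasDerivAt_sechSq'', deriv_wave_time hasDerivAt_sechSq,
    deriv_wave_time hasDerivAt_sechSq'']
  set ξ := lam * (x - cs * t - x₀)
  constructor
  · linear_combination (-η₀ * lam * sechSq' ξ) * h₁ + (2 * η₀ * lam * sechSq ξ * sechSq' ξ) * h₂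
  · linear_combination (-η₀ * lam * sechSq' ξ) * h₃ + (η₀ * lam * sechSq ξ * sechSq' ξ) * h₄

theorem bona_smith_wave_relations {θ η₀ cs lam B b c : ℝ} (h₁ : 7/9 < θ) (h₂ : θ < 1)
    (hη₀ : η₀ = 9/2 * (θ - 7/9) / (1 - θ)) (hB : B ^ 2 = 2 * (1 - θ) / (θ - 1/3))
    (hcs : cs = 4 * (θ - 2/3) / (B * (θ - 1/3)))
    (hlam : lam ^ 2 = 3 * (θ - 7/9) / ((θ - 1/3) * (θ - 2/3)) / 4)
    (hb : b = (3 * θ - 1) / 6) (hc : c = (2 - 3 * θ) / 3) :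
    cs * (1 - 4 * b * lam ^ 2) = B ∧ B * η₀ = 6 * b * lam ^ 2 * cs ∧
      B * cs = 1 + 4 * lam ^ 2 * (c + b * B * cs) ∧
      B ^ 2 * η₀ = 12 * lam ^ 2 * (c + b * B * cs) := by
  have hD : θ * 3 - 1 ≠ 0 := by linarith
  have hE : 1 - θ ≠ 0 := by linarith
  have hF : θ * 3 - 2 ≠ 0 := by linarith
  have hB₀ : B ≠ 0 := by
    rintro rfl
    field_simp at hB
    linarith
  subst hη₀ hcs hb hc
  rw [hlam]
  refine ⟨?_, ?_, ?_, ?_⟩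
  · field_simp
    rw [hB]
    field_simp
    ring
  · field_simp
    rw [hB]
    field_simp
    ring
  · field_simp
    ring
  · rw [hB]
    field_simp
    ring

/-- for `θ² ∈ (7/9,1)` the explicit `sech²` traveling-wave pair
`(η_s, u_s)` solves the Bona-Smith system
`η_t + u_x + (ηu)_x - b η_{xxt} = 0`,
`u_t + η_x + u u_x + c η_{xxx} - b u_{xxt} = 0`
with `b = (3θ²-1)/6`, `c = (2-3θ²)/3`. -/
theorem bona_smith_solitary_wave (θsq : ℝ) (h₁ : 7/9 < θsq) (h₂ : θsq < 1)
    (x₀ : ℝ) :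
    let η₀ : ℝ := (9/2) * (θsq - 7/9) / (1 - θsq)
    let cs : ℝ := 4 * (θsq - 2/3) / Real.sqrt (2 * (1 - θsq) * (θsq - 1/3))
    let lam : ℝ := (1/2) * Real.sqrt (3 * (θsq - 7/9) / ((θsq - 1/3) * (θsq - 2/3)))
    let B : ℝ := Real.sqrt (2 * (1 - θsq) / (θsq - 1/3))
    let b : ℝ := (3 * θsq - 1) / 6
    let c : ℝ := (2 - 3 * θsq) / 3
    let ηs : ℝ → ℝ → ℝ := fun x t => η₀ * (sech (lam * (x - cs * t - x₀)))^2
    let us : ℝ → ℝ → ℝ := fun x t => B * ηs x t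
    ∀ x t : ℝ,
      deriv (fun s => ηs x s) t + deriv (fun y => us y t) x
        + deriv (fun y => ηs y t * us y t) x
        - b * deriv (fun s => deriv (fun y => deriv (fun z => ηs z s) y) x) t = 0 ∧
      deriv (fun s => us x s) t + deriv (fun y => ηs y t) x
        + us x t * deriv (fun y => us y t) x
        + c * deriv (fun y => deriv (fun z => deriv (fun r => ηs r t) z) y) x
        - b * deriv (fun s => deriv (fun y => deriv (fun z => us z s) y) x) t = 0 := by
  intro η₀ cs lam B b c
  have hD : 0 < θsq - 1/3 := by linarith
  have hE : 0 < 1 - θsq := by linarith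
  have hF : 0 < θsq - 2/3 := by linarith
  have hG : 0 < θsq - 7/9 := by linarith
  have hB : B ^ 2 = 2 * (1 - θsq) / (θsq - 1/3) := sq_sqrt (by positivity)
  have hcs : cs = 4 * (θsq - 2/3) / (B * (θsq - 1/3)) := by
    have hsqrt : sqrt (2 * (1 - θsq) * (θsq - 1/3)) = B * (θsq - 1/3) := by
      rw [show 2 * (1 - θsq) * (θsq - 1/3) = 2 * (1 - θsq) / (θsq - 1/3) * (θsq - 1/3) ^ 2 by
        field_simp, sqrt_mul (by positivity), sqrt_sq hD.le]
    rw [← hsqrt]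
  have hlam : lam ^ 2 = 3 * (θsq - 7/9) / ((θsq - 1/3) * (θsq - 2/3)) / 4 := by
    rw [mul_pow, sq_sqrt (by positivity)]
    ring
  obtain ⟨r₁, r₂, r₃, r₄⟩ := bona_smith_wave_relations h₁ h₂ rfl hB hcs hlam rfl rfl
  exact sech_sq_wave_solves_bona_smith x₀ r₁ r₂ r₃ r₄
end
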